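/- Let n ≥ 2 be an integer, let X₁, …, Xₙ be smooth real-valued functions on the upper half-space {x ∈ ℝⁿ : xₙ > 0}, and let λ, ρ ∈ ℝ. Suppose that on the upper half-space: for every k ∈ {1, …, n}, ∂ₖXₖ − Xₙ/xₙ = λ + (n−1)(1−nρ), and for all j ≠ k, ∂ⱼXₖ + ∂ₖXⱼ = 0. Then λ = (n−1)(nρ−1), and consequently the vector field X = ΣₖXₖ∂ₖ is a Killing field of the hyperbolic metric (i.e. ∂ₖXₖ − Xₙ/xₙ = 0 for every k). -/

import Mathlib

open Set

/-- Partial derivative in the `i`-th coordinate direction. -/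
noncomputable def pd {m : ℕ} (i : Fin m) (f : (Fin m → ℝ) → ℝ) (x : Fin m → ℝ) : ℝ :=
  deriv (fun t => f (Function.update x i t)) (x i)

section helpers

variable {m : ℕ}

lemma hasDerivAt_update' (x : Fin m → ℝ) (i : Fin m) (t : ℝ) :
    HasDerivAt (fun s : ℝ => Function.update x i s) (Pi.single i 1) t := by
  have h : (fun s : ℝ => Function.update x i s)
      = fun s : ℝ => x + (s - x i) • (Pi.single i 1 : Fin m → ℝ) := by
    funext s
    funext j
    rcases eq_or_ne j i with rfl | hj
    · simp
    · simp [Function.update_of_ne hj, Pi.single_apply, hj]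
  rw [h]
  simpa using (((hasDerivAt_id t).sub_const (x i)).smul_const
    (Pi.single i 1 : Fin m → ℝ)).const_add x

lemma slice_hasDerivAt {f : (Fin m → ℝ) → ℝ} {f' : (Fin m → ℝ) →L[ℝ] ℝ}
    {x : Fin m → ℝ} (i : Fin m) (hf : HasFDerivAt f f' x) :
    HasDerivAt (fun t => f (Function.update x i t)) (f' (Pi.single i 1)) (x i) := by
  have h := hasDerivAt_update' x i (x i)
  have hf' : HasFDerivAt f f' (Function.update x i (x i)) := by
    rwa [Function.update_eq_self]
  exact hf'.comp_hasDerivAt _ h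

lemma pd_eq_fderiv {f : (Fin m → ℝ) → ℝ} {x : Fin m → ℝ} (i : Fin m)
    (hf : DifferentiableAt ℝ f x) :
    pd i f x = fderiv ℝ f x (Pi.single i 1) :=
  (slice_hasDerivAt i hf.hasFDerivAt).deriv

lemma pd_congr {f g : (Fin m → ℝ) → ℝ} {x : Fin m → ℝ} (i : Fin m)
    (h : f =ᶠ[nhds x] g) : pd i f x = pd i g x := by
  unfold pd
  apply Filter.EventuallyEq.deriv_eq
  have hc : Filter.Tendsto (fun t : ℝ => Function.update x i t)
      (nhds (x i)) (nhds x) := by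
    have := (hasDerivAt_update' x i (x i)).continuousAt
    rwa [ContinuousAt, Function.update_eq_self] at this
  exact h.comp_tendsto hc

lemma pd_neg (f : (Fin m → ℝ) → ℝ) (x : Fin m → ℝ) (i : Fin m) :
    pd i (fun y => -(f y)) x = -pd i f x := by
  unfold pd
  simp [deriv.neg]

lemma pd_pd {s : Set (Fin m → ℝ)} {f : (Fin m → ℝ) → ℝ} {x : Fin m → ℝ}
    (hs : IsOpen s) (hf : ContDiffOn ℝ (⊤ : ℕ∞) f s) (hx : x ∈ s) (i j : Fin m) :
    pd i (pd j f) x = fderiv ℝ (fderiv ℝ f) x (Pi.single i 1) (Pi.single j 1) := by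
  have hmem : s ∈ nhds x := hs.mem_nhds hx
  have hdiff : ∀ y ∈ s, DifferentiableAt ℝ f y := fun y hy =>
    ((hf.contDiffAt (hs.mem_nhds hy)).differentiableAt (by simp))
  have h1 : pd j f =ᶠ[nhds x] fun y => fderiv ℝ f y (Pi.single j 1) :=
    Filter.eventuallyEq_of_mem hmem fun y hy => pd_eq_fderiv j (hdiff y hy)
  rw [pd_congr i h1]
  have hfd : DifferentiableAt ℝ (fderiv ℝ f) x :=
    (((hf.fderiv_of_isOpen (m := 1) hs (WithTop.coe_le_coe.mpr le_top)).contDiffAt hmem).differentiableAt (by simp))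
  have h2 : HasFDerivAt (fun y => fderiv ℝ f y (Pi.single j 1))
      ((fderiv ℝ (fderiv ℝ f) x).flip (Pi.single j 1)) x := by
    simpa using hfd.hasFDerivAt.clm_apply (hasFDerivAt_const (Pi.single j 1 : Fin m → ℝ) x)
  simpa [pd] using (slice_hasDerivAt i h2).deriv

lemma pd_pd_comm {s : Set (Fin m → ℝ)} {f : (Fin m → ℝ) → ℝ} {x : Fin m → ℝ}
    (hs : IsOpen s) (hf : ContDiffOn ℝ (⊤ : ℕ∞) f s) (hx : x ∈ s) (i j : Fin m) :
    pd i (pd j f) x = pd j (pd i f) x := by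
  rw [pd_pd hs hf hx i j, pd_pd hs hf hx j i]
  exact ((hf.contDiffAt (hs.mem_nhds hx)).isSymmSndFDerivAt (by simp only [minSmoothness_of_isRCLikeNormedField]; exact WithTop.coe_le_coe.mpr le_top)) _ _

lemma pd_div_add_const {h : (Fin m → ℝ) → ℝ} {x : Fin m → ℝ} {i N : Fin m}
    (hiN : i ≠ N) (c : ℝ) :
    pd i (fun y => h y / y N + c) x = pd i h x / x N := by
  unfold pd
  have heq : (fun t => h (Function.update x i t) / (Function.update x i t) N + c)
      = fun t => h (Function.update x i t) / x N + c := by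
    funext t
    rw [Function.update_of_ne (Ne.symm hiN)]
  rw [heq, deriv_add_const, deriv_div_const]

lemma pd_self_div {h : (Fin m → ℝ) → ℝ} {x : Fin m → ℝ} {N : Fin m}
    (hh : DifferentiableAt ℝ h x) (hxN : x N ≠ 0) (c : ℝ) :
    pd N (fun y => h y / y N + c) x = (pd N h x * x N - h x) / (x N) ^ 2 := by
  have hsl := slice_hasDerivAt N hh.hasFDerivAt
  have hd : HasDerivAt (fun t => h (Function.update x N t) / t + c)
      ((fderiv ℝ h x (Pi.single N 1) * x N - h x) / (x N) ^ 2) (x N) := by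
    simpa [Function.update_eq_self] using (hsl.div (hasDerivAt_id (x N)) hxN).add_const c
  unfold pd
  have heq : (fun t => h (Function.update x N t) / (Function.update x N t) N + c)
      = fun t => h (Function.update x N t) / t + c := by
    funext t
    rw [Function.update_self]
  rw [heq, hd.deriv, hsl.deriv]

lemma key {m : ℕ} (N K : Fin m) (hKN : K ≠ N) (X : Fin m → (Fin m → ℝ) → ℝ) (c : ℝ)
    (hX : ∀ k, ContDiffOn ℝ (⊤ : ℕ∞) (X k) {x : Fin m → ℝ | 0 < x N})
    (h1 : ∀ k, ∀ x : Fin m → ℝ, 0 < x N → pd k (X k) x = X N x / x N + c)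
    (h2 : ∀ j k, j ≠ k → ∀ x : Fin m → ℝ, 0 < x N →
      pd j (X k) x + pd k (X j) x = 0) :
    c = 0 := by
  set s : Set (Fin m → ℝ) := {x | 0 < x N} with hsdef
  have hs : IsOpen s := isOpen_lt continuous_const (continuous_apply N)
  have hXd : ∀ k, ∀ x ∈ s, DifferentiableAt ℝ (X k) x := fun k x hx =>
    ((hX k).contDiffAt (hs.mem_nhds hx)).differentiableAt (by simp)
  -- smoothness of pd K (X N) on s
  have hF : ContDiffOn ℝ (⊤ : ℕ∞) (pd K (X N)) s := by
    have h' : ContDiffOn ℝ (⊤ : ℕ∞) (fun y => fderiv ℝ (X N) y (Pi.single K 1)) s :=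
      ((hX N).fderiv_of_isOpen hs (by simp)).clm_apply contDiffOn_const
    exact h'.congr fun y hy => pd_eq_fderiv K (hXd N y hy)
  -- Claim 1
  have claim1 : ∀ x ∈ s, pd N (pd K (X N)) x = pd K (X N) x / x N := by
    intro x hx
    calc pd N (pd K (X N)) x = pd K (pd N (X N)) x := pd_pd_comm hs (hX N) hx N K
      _ = pd K (fun y => X N y / y N + c) x :=
          pd_congr K (Filter.eventuallyEq_of_mem (hs.mem_nhds hx) fun y hy => h1 N y hy)
      _ = pd K (X N) x / x N := pd_div_add_const hKN c
  -- Claim 2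
  have claim2 : ∀ x ∈ s, pd K (pd K (X N)) x = -c / x N := by
    intro x hx
    have hxN : (0 : ℝ) < x N := hx
    have hBev : pd K (X N) =ᶠ[nhds x] fun y => -(pd N (X K) y) :=
      Filter.eventuallyEq_of_mem (hs.mem_nhds hx) fun y hy => by
        have := h2 K N hKN y hy
        linarith
    calc pd K (pd K (X N)) x = pd K (fun y => -(pd N (X K) y)) x := pd_congr K hBev
      _ = -pd K (pd N (X K)) x := pd_neg _ _ _
      _ = -pd N (pd K (X K)) x := by rw [pd_pd_comm hs (hX K) hx K N]
      _ = -pd N (fun y => X N y / y N + c) x := by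
          rw [pd_congr N (Filter.eventuallyEq_of_mem (hs.mem_nhds hx)
            fun y hy => h1 K y hy)]
      _ = -((pd N (X N) x * x N - X N x) / (x N) ^ 2) := by
          rw [pd_self_div (hXd N x hx) hxN.ne' c]
      _ = -c / x N := by
          rw [h1 N x hx]
          field_simp
          ring
  -- Claim 3 : evaluate at the point (1,...,1)
  set x₀ : Fin m → ℝ := fun _ => (1 : ℝ) with hx₀def
  have hx₀ : x₀ ∈ s := by simp [hsdef, hx₀def]
  have hcomm : pd N (pd K (pd K (X N))) x₀ = pd K (pd N (pd K (X N))) x₀ :=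
    pd_pd_comm hs hF hx₀ N K
  have hL : pd N (pd K (pd K (X N))) x₀ = c := by
    rw [pd_congr N (Filter.eventuallyEq_of_mem (hs.mem_nhds hx₀)
      fun y hy => claim2 y hy)]
    unfold pd
    have heq : (fun t => -c / (Function.update x₀ N t) N)
        = fun t : ℝ => -c / t := by
      funext t
      rw [Function.update_self]
    rw [heq]
    have hd : HasDerivAt (fun t : ℝ => -c / t)
        ((0 * x₀ N - (-c) * 1) / (x₀ N) ^ 2) (x₀ N) :=
      (hasDerivAt_const (x₀ N) (-c)).div (hasDerivAt_id (x₀ N)) (by simp [hx₀def])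
    rw [hd.deriv]
    simp [hx₀def]
  have hR : pd K (pd N (pd K (X N))) x₀ = -c := by
    rw [pd_congr K (Filter.eventuallyEq_of_mem (hs.mem_nhds hx₀)
      fun y hy => claim1 y hy)]
    have heq : (fun y : Fin m → ℝ => pd K (X N) y / y N)
        = fun y => pd K (X N) y / y N + 0 := by
      funext y
      ring
    rw [heq, pd_div_add_const hKN 0, claim2 x₀ hx₀]
    simp [hx₀def]
  have : c = -c := hL.symm.trans (hcomm.trans hR)
  linarith

end helpers

/-- Ricci–Bourguignon case of Theorem 3.11: if `(ℍⁿ, ds², X, λ, ρ)` is a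
Ricci–Bourguignon soliton, then `λ = (n-1)(nρ-1)` and `X` is Killing. -/
theorem stmt_10 (n : ℕ) (hn : 2 ≤ n) (X : Fin n → (Fin n → ℝ) → ℝ) (lam rho : ℝ)
    (hX : ∀ k : Fin n, ContDiffOn ℝ (⊤ : ℕ∞) (X k) {x : Fin n → ℝ | 0 < x ⟨n - 1, by omega⟩})
    (h1 : ∀ k : Fin n, ∀ x : Fin n → ℝ, 0 < x ⟨n - 1, by omega⟩ →
      pd k (X k) x - X ⟨n - 1, by omega⟩ x / x ⟨n - 1, by omega⟩
        = lam + ((n : ℝ) - 1) * (1 - (n : ℝ) * rho))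
    (h2 : ∀ j k : Fin n, j ≠ k → ∀ x : Fin n → ℝ, 0 < x ⟨n - 1, by omega⟩ →
      pd j (X k) x + pd k (X j) x = 0) :
    lam = ((n : ℝ) - 1) * ((n : ℝ) * rho - 1) ∧
    ∀ k : Fin n, ∀ x : Fin n → ℝ, 0 < x ⟨n - 1, by omega⟩ →
      pd k (X k) x - X ⟨n - 1, by omega⟩ x / x ⟨n - 1, by omega⟩ = 0 := by
  have hn1 : n - 1 < n := by omega
  have h0 : 0 < n := by omega
  have hc : lam + ((n : ℝ) - 1) * (1 - (n : ℝ) * rho) = 0 := by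
    apply key (⟨n - 1, hn1⟩ : Fin n) (⟨0, h0⟩ : Fin n)
      (by simp [Fin.ext_iff]; omega) X _ hX
    · intro k x hx
      have := h1 k x hx
      linarith
    · intro j k hjk x hx
      exact h2 j k hjk x hx
  constructor
  · linear_combination hc
  · intro k x hx
    rw [h1 k x hx]
    exact hc
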